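/- Let X be a chain and let α, β be orientation-preserving partial transformations of X with Ker(α) = Ker(β) (in particular Dom(α) = Dom(β), and for all x, y ∈ Dom(α), α(x) = α(y) iff β(x) = β(y)). Then the canonical bijection θ : Im(α) → Im(β), defined by θ(α(x)) = β(x) for all x ∈ Dom(α), is an orientation-preserving bijection. Moreover, if α and β are both order-preserving, then θ is an order isomorphism from Im(α) onto Im(β). -/
import Mathlib


variable {X : Type*}

/-- The partial transformation `f` is order-preserving on the subset `A` of its domain. -/
def IsOrdOn [LinearOrder X] (f : X →. X) (A : Set X) : Prop :=
  ∀ ⦃x y u v : X⦄, x ∈ A → y ∈ A → x ≤ y → u ∈ f x → v ∈ f y → u ≤ v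

/-- `Y` is an ideal of the partial transformation `f`: a nonempty subset of the domain such
that `f` is order-preserving on `Y` and on `Dom f \ Y`, and every element of `Y` is below every
element of `Dom f \ Y` while its image is above. -/
def IsIdeal [LinearOrder X] (f : X →. X) (Y : Set X) : Prop :=
  Y.Nonempty ∧ Y ⊆ f.Dom ∧ IsOrdOn f Y ∧ IsOrdOn f (f.Dom \ Y) ∧
    ∀ ⦃a b u v : X⦄, a ∈ Y → b ∈ f.Dom \ Y → u ∈ f a → v ∈ f b → a ≤ b ∧ v ≤ u

/-- `f` is an orientation-preserving partial transformation: it is the empty transformation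
or it admits an ideal. -/
def IsOP [LinearOrder X] (f : X →. X) : Prop :=
  f.Dom = ∅ ∨ ∃ Y : Set X, IsIdeal f Y

/-- If `α, β` are orientation-preserving partial transformations with `Ker α = Ker β`, then
the canonical bijection `θ : Im α → Im β` (with `θ (α x) = β x` for `x ∈ Dom α`) is an
orientation-preserving bijection from `Im α` onto `Im β`; moreover, if `α` and `β` are both
order-preserving, then `θ` is an order isomorphism. -/
theorem stmt15 (X : Type*) [LinearOrder X] (α β : X →. X)
    (hα : IsOP α) (hβ : IsOP β)
    (hdom : α.Dom = β.Dom)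
    (hker : ∀ x ∈ α.Dom, ∀ y ∈ α.Dom, (α x = α y ↔ β x = β y))
    (θ : X →. X) (hθdom : θ.Dom = α.ran)
    (hθ : ∀ x : X, ∀ u ∈ α x, ∀ v ∈ β x, v ∈ θ u) :
    IsOP θ ∧ (∀ ⦃u v w : X⦄, w ∈ θ u → w ∈ θ v → u = v) ∧ θ.ran = β.ran ∧
      ((IsOrdOn α α.Dom ∧ IsOrdOn β β.Dom) →
        ∀ ⦃u v p q : X⦄, p ∈ θ u → q ∈ θ v → (u ≤ v ↔ p ≤ q)) := by
  -- kernels: same α-values give same β-values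
  have hkeq : ∀ {x y u : X}, u ∈ α x → u ∈ α y → β x = β y := by
    intro x y u hx hy
    have hxd : x ∈ α.Dom := (PFun.mem_dom _ _).mpr ⟨u, hx⟩
    have hyd : y ∈ α.Dom := (PFun.mem_dom _ _).mpr ⟨u, hy⟩
    refine (hker x hxd y hyd).mp ?_
    rw [Part.eq_some_iff.mpr hx, Part.eq_some_iff.mpr hy]
  have hkeq' : ∀ {x y p : X}, x ∈ α.Dom → y ∈ α.Dom → p ∈ β x → p ∈ β y → α x = α y := by
    intro x y p hx hy hpx hpy
    refine (hker x hx y hy).mpr ?_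
    rw [Part.eq_some_iff.mpr hpx, Part.eq_some_iff.mpr hpy]
  have hbd : ∀ {x : X}, x ∈ α.Dom → ∃ v, v ∈ β x := by
    intro x hx
    exact (PFun.mem_dom _ _).mp (hdom ▸ hx)
  -- the value of θ at α-values is the corresponding β-value
  have hval : ∀ {u x p : X}, u ∈ α x → p ∈ θ u → p ∈ β x := by
    intro u x p hu hp
    obtain ⟨v, hv⟩ := hbd ((PFun.mem_dom _ _).mpr ⟨u, hu⟩)
    have hvθ := hθ x u hu v hv
    rwa [Part.mem_unique hp hvθ]
  -- preimages of elements of θ.Dom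
  have hpre : ∀ {u : X}, u ∈ θ.Dom → ∃ x, u ∈ α x := by
    intro u hu
    rw [hθdom] at hu
    exact hu
  -- monotonicity transfer lemma
  have mono : ∀ {A B : Set X} {x y u v p q : X}, IsOrdOn α A → IsOrdOn β B →
      x ∈ A → y ∈ A → x ∈ B → y ∈ B → u ∈ α x → v ∈ α y → p ∈ β x → q ∈ β y →
      u ≤ v → p ≤ q := by
    intro A B x y u v p q hA hB hxA hyA hxB hyB hu hv hp hq huv
    rcases le_total x y with h | h
    · exact hB hxB hyB h hp hq
    · have hvu : v ≤ u := hA hyA hxA h hv hu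
      have : u = v := le_antisymm huv hvu
      subst this
      have hβeq : β x = β y := hkeq hu hv
      rw [hβeq] at hp
      exact le_of_eq (Part.mem_unique hp hq)
  -- injectivity
  have hinj : ∀ ⦃u v w : X⦄, w ∈ θ u → w ∈ θ v → u = v := by
    intro u v w hu hv
    obtain ⟨x, hx⟩ := hpre ((PFun.mem_dom _ _).mpr ⟨w, hu⟩)
    obtain ⟨y, hy⟩ := hpre ((PFun.mem_dom _ _).mpr ⟨w, hv⟩)
    have hwx : w ∈ β x := hval hx hu
    have hwy : w ∈ β y := hval hy hv
    have : α x = α y := hkeq' ((PFun.mem_dom _ _).mpr ⟨u, hx⟩) ((PFun.mem_dom _ _).mpr ⟨v, hy⟩) hwx hwy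
    rw [this] at hx
    exact Part.mem_unique hx hy
  -- ranges
  have hran : θ.ran = β.ran := by
    ext w
    constructor
    · rintro ⟨u, hu⟩
      obtain ⟨x, hx⟩ := hpre ((PFun.mem_dom _ _).mpr ⟨w, hu⟩)
      exact ⟨x, hval hx hu⟩
    · rintro ⟨x, hx⟩
      have hxd : x ∈ α.Dom := hdom ▸ (PFun.mem_dom _ _).mpr ⟨w, hx⟩
      obtain ⟨u, hu⟩ := (PFun.mem_dom _ _).mp hxd
      exact ⟨u, hθ x u hu w hx⟩
  -- order isomorphism part
  have hiso : (IsOrdOn α α.Dom ∧ IsOrdOn β β.Dom) →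
      ∀ ⦃u v p q : X⦄, p ∈ θ u → q ∈ θ v → (u ≤ v ↔ p ≤ q) := by
    rintro ⟨hαo, hβo⟩ u v p q hpu hqv
    obtain ⟨x, hx⟩ := hpre ((PFun.mem_dom _ _).mpr ⟨p, hpu⟩)
    obtain ⟨y, hy⟩ := hpre ((PFun.mem_dom _ _).mpr ⟨q, hqv⟩)
    have hxd : x ∈ α.Dom := (PFun.mem_dom _ _).mpr ⟨u, hx⟩
    have hyd : y ∈ α.Dom := (PFun.mem_dom _ _).mpr ⟨v, hy⟩
    have hpx : p ∈ β x := hval hx hpu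
    have hqy : q ∈ β y := hval hy hqv
    constructor
    · exact mono hαo hβo hxd hyd (hdom ▸ hxd) (hdom ▸ hyd) hx hy hpx hqy
    · intro hpq
      rcases le_total x y with h | h
      · exact hαo hxd hyd h hx hy
      · have : q ≤ p := hβo (hdom ▸ hyd) (hdom ▸ hxd) h hqy hpx
        have hpq' : p = q := le_antisymm hpq this
        subst hpq'
        have : α x = α y := hkeq' hxd hyd hpx hqy
        rw [this] at hx
        exact le_of_eq (Part.mem_unique hx hy)
  refine ⟨?_, hinj, hran, hiso⟩
  -- orientation-preserving part
  by_cases hD : α.Dom = ∅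
  · left
    rw [hθdom]
    ext u
    simp only [Set.mem_empty_iff_false, iff_false]
    rintro ⟨x, hx⟩
    have : x ∈ α.Dom := (PFun.mem_dom _ _).mpr ⟨u, hx⟩
    rw [hD] at this
    exact this
  rcases hα with h | ⟨Ya, hYane, hYaD, hαY, hαC, hαid⟩
  · exact absurd h hD
  rcases hβ with h | ⟨Yb, hYbne, hYbD, hβY, hβC, hβid⟩
  · exact absurd (hdom.trans h) hD
  simp only [← hdom] at hYbD hβC hβid
  -- the ideal builder
  have build : ∀ S : Set X, S ⊆ α.Dom → (∃ m, m ∈ S) →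
      (∀ x ∈ S, ∀ y ∈ S, ∀ u ∈ α x, ∀ v ∈ α y, ∀ p ∈ β x, ∀ q ∈ β y, u ≤ v → p ≤ q) →
      (∀ x ∈ α.Dom \ S, ∀ y ∈ α.Dom \ S,
        ∀ u ∈ α x, ∀ v ∈ α y, ∀ p ∈ β x, ∀ q ∈ β y, u ≤ v → p ≤ q) →
      (∀ x ∈ S, ∀ y ∈ α.Dom \ S,
        ∀ u ∈ α x, ∀ v ∈ α y, ∀ p ∈ β x, ∀ q ∈ β y, u ≤ v ∧ q ≤ p) →
      IsOP θ := by
    intro S hSD hSne h1 h2 h3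
    right
    refine ⟨{u | ∃ x ∈ S, u ∈ α x}, ?_, ?_, ?_, ?_, ?_⟩
    · obtain ⟨m, hm⟩ := hSne
      obtain ⟨u, hu⟩ := (PFun.mem_dom _ _).mp (hSD hm)
      exact ⟨u, m, hm, hu⟩
    · rintro u ⟨x, hxS, hux⟩
      rw [hθdom]
      exact ⟨x, hux⟩
    · rintro a b p q ⟨x, hxS, hax⟩ ⟨y, hyS, hby⟩ hab hp hq
      exact h1 x hxS y hyS a hax b hby p (hval hax hp) q (hval hby hq) hab
    · rintro a b p q ⟨haD, haW⟩ ⟨hbD, hbW⟩ hab hp hq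
      obtain ⟨x, hax⟩ := hpre haD
      obtain ⟨y, hby⟩ := hpre hbD
      have hxS : x ∉ S := fun h => haW ⟨x, h, hax⟩
      have hyS : y ∉ S := fun h => hbW ⟨y, h, hby⟩
      exact h2 x ⟨(PFun.mem_dom _ _).mpr ⟨a, hax⟩, hxS⟩ y ⟨(PFun.mem_dom _ _).mpr ⟨b, hby⟩, hyS⟩
        a hax b hby p (hval hax hp) q (hval hby hq) hab
    · rintro a b p q ⟨x, hxS, hax⟩ ⟨hbD, hbW⟩ hp hq
      obtain ⟨y, hby⟩ := hpre hbD
      have hyS : y ∉ S := fun h => hbW ⟨y, h, hby⟩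
      exact h3 x hxS y ⟨(PFun.mem_dom _ _).mpr ⟨b, hby⟩, hyS⟩
        a hax b hby p (hval hax hp) q (hval hby hq)
  by_cases hba : Yb ⊆ Ya
  · -- case Yb ⊆ Ya : take S = (Dom \ Ya) ∪ Yb
    refine build ((α.Dom \ Ya) ∪ Yb) ?_ ?_ ?_ ?_ ?_
    · rintro x (hx | hx)
      · exact hx.1
      · exact hYbD hx
    · obtain ⟨b0, hb0⟩ := hYbne
      exact ⟨b0, Or.inr hb0⟩
    · -- on S : U ∪ L
      rintro x (hxU | hxL) y (hyU | hyL) u hu v hv p hp q hq huv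
      · exact mono hαC hβC hxU hyU ⟨hxU.1, fun h => hxU.2 (hba h)⟩
          ⟨hyU.1, fun h => hyU.2 (hba h)⟩ hu hv hp hq huv
      · -- x ∈ U, y ∈ L = Yb : β-images of Yb dominate
        exact (hβid hyL ⟨hxU.1, fun h => hxU.2 (hba h)⟩ hq hp).2
      · -- x ∈ L, y ∈ U : α x ≥ α y forces equality
        have := (hαid (hba hxL) hyU hu hv).2
        have huveq : u = v := le_antisymm huv this
        subst huveq
        have : β x = β y := hkeq hu hv
        rw [this] at hp
        exact le_of_eq (Part.mem_unique hp hq)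
      · exact mono hαY hβY (hba hxL) (hba hyL) hxL hyL hu hv hp hq huv
    · -- on Dom \ S = M = Ya \ Yb
      rintro x ⟨hxD, hxS⟩ y ⟨hyD, hyS⟩ u hu v hv p hp q hq huv
      have hxYa : x ∈ Ya := by
        by_contra h
        exact hxS (Or.inl ⟨hxD, h⟩)
      have hyYa : y ∈ Ya := by
        by_contra h
        exact hyS (Or.inl ⟨hyD, h⟩)
      have hxYb : x ∉ Yb := fun h => hxS (Or.inr h)
      have hyYb : y ∉ Yb := fun h => hyS (Or.inr h)
      exact mono hαY hβC hxYa hyYa ⟨hxD, hxYb⟩ ⟨hyD, hyYb⟩ hu hv hp hq huv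
    · -- between S and M
      rintro x hxS y ⟨hyD, hyS⟩ u hu v hv p hp q hq
      have hyYa : y ∈ Ya := by
        by_contra h
        exact hyS (Or.inl ⟨hyD, h⟩)
      have hyYb : y ∉ Yb := fun h => hyS (Or.inr h)
      rcases hxS with hxU | hxL
      · -- x ∈ U = Dom \ Ya
        have h4 := hαid hyYa hxU hv hu
        refine ⟨h4.2, ?_⟩
        exact hβC ⟨hyD, hyYb⟩ ⟨hxU.1, fun h => hxU.2 (hba h)⟩ h4.1 hq hp
      · -- x ∈ L = Yb
        have h4 := hβid hxL ⟨hyD, hyYb⟩ hp hq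
        refine ⟨?_, h4.2⟩
        exact hαY (hba hxL) hyYa h4.1 hu hv
  · -- case ¬ Yb ⊆ Ya : then Ya ⊆ Yb, take S = Yb \ Ya
    obtain ⟨m, hmYb, hmYa⟩ := Set.not_subset.mp hba
    have hsub : Ya ⊆ Yb := by
      intro a haYa
      by_contra haYb
      obtain ⟨u, hu⟩ := (PFun.mem_dom _ _).mp (hYaD haYa)
      obtain ⟨v, hv⟩ := (PFun.mem_dom _ _).mp (hYbD hmYb)
      obtain ⟨p, hp⟩ := hbd (hYaD haYa)
      obtain ⟨w, hw⟩ := hbd (hYbD hmYb)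
      have h1 := (hαid haYa ⟨hYbD hmYb, hmYa⟩ hu hv).1
      have h2 := (hβid hmYb ⟨hYaD haYa, haYb⟩ hw hp).1
      have : a = m := le_antisymm h1 h2
      exact haYb (this ▸ hmYb)
    refine build (Yb \ Ya) ?_ ⟨m, hmYb, hmYa⟩ ?_ ?_ ?_
    · rintro x ⟨hx, _⟩
      exact hYbD hx
    · -- on S = M = Yb \ Ya
      rintro x ⟨hxYb, hxYa⟩ y ⟨hyYb, hyYa⟩ u hu v hv p hp q hq huv
      exact mono hαC hβY ⟨hYbD hxYb, hxYa⟩ ⟨hYbD hyYb, hyYa⟩ hxYb hyYb hu hv hp hq huv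
    · -- on Dom \ S = L ∪ U
      rintro x ⟨hxD, hxS⟩ y ⟨hyD, hyS⟩ u hu v hv p hp q hq huv
      have hx' : x ∈ Ya ∨ x ∉ Yb := by
        by_contra h
        push_neg at h
        exact hxS ⟨h.2, h.1⟩
      have hy' : y ∈ Ya ∨ y ∉ Yb := by
        by_contra h
        push_neg at h
        exact hyS ⟨h.2, h.1⟩
      rcases hx' with hxL | hxU
      · rcases hy' with hyL | hyU
        · exact mono hαY hβY hxL hyL (hsub hxL) (hsub hyL) hu hv hp hq huv
        · -- x ∈ L, y ∈ U : α x ≥ α y forces equality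
          have := (hαid hxL ⟨hyD, fun h => hyU (hsub h)⟩ hu hv).2
          have huveq : u = v := le_antisymm huv this
          subst huveq
          have : β x = β y := hkeq hu hv
          rw [this] at hp
          exact le_of_eq (Part.mem_unique hp hq)
      · rcases hy' with hyL | hyU
        · -- x ∈ U, y ∈ L : β y ≥ β x unconditionally
          exact (hβid (hsub hyL) ⟨hxD, hxU⟩ hq hp).2
        · have hxYa : x ∉ Ya := fun h => hxU (hsub h)
          have hyYa : y ∉ Ya := fun h => hyU (hsub h)
          exact mono hαC hβC ⟨hxD, hxYa⟩ ⟨hyD, hyYa⟩ ⟨hxD, hxU⟩ ⟨hyD, hyU⟩ hu hv hp hq huv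
    · -- between M and L ∪ U
      rintro x ⟨hxYb, hxYa⟩ y ⟨hyD, hyS⟩ u hu v hv p hp q hq
      have hy' : y ∈ Ya ∨ y ∉ Yb := by
        by_contra h
        push_neg at h
        exact hyS ⟨h.2, h.1⟩
      rcases hy' with hyL | hyU
      · -- y ∈ L = Ya
        have h4 := hαid hyL ⟨hYbD hxYb, hxYa⟩ hv hu
        refine ⟨h4.2, ?_⟩
        exact hβY (hsub hyL) hxYb h4.1 hq hp
      · -- y ∈ U
        have h4 := hβid hxYb ⟨hyD, hyU⟩ hp hq
        refine ⟨?_, h4.2⟩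
        exact hαC ⟨hYbD hxYb, hxYa⟩ ⟨hyD, fun h => hyU (hsub h)⟩ h4.1 hu hv
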